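/- arXiv:2301.10647 — 5 statements merged into one kernel-verified Lean document; each statement's English description precedes it below -/
import Mathlib

section
/- (Patterson's theorem) Let N ≥ 1 and let A, B ⊆ [0,N-1]. Then A and B are homometric if and only if their complements A^c = [0,N-1] \ A and B^c = [0,N-1] \ B are homometric. -/
/-- The cyclic distance `d(i,j) = min(|i-j|, N-|i-j|)` on `ZMod N`. -/
def cdist {N : ℕ} (i j : ZMod N) : ℕ := min (i - j).val (j - i).val

/-- The cyclic difference multiset `A - B = {d(i,j) : i ∈ A, j ∈ B}`. -/
def diffMS {N : ℕ} (A B : Finset (ZMod N)) : Multiset ℕ :=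
  (A ×ˢ B).val.map fun p => cdist p.1 p.2

/-- The self difference multiset `A - A = {d(i,j) : i ≤ j ∈ A}`. -/
def selfDiffMS {N : ℕ} (A : Finset (ZMod N)) : Multiset ℕ :=
  ((A ×ˢ A).filter fun p => p.1.val ≤ p.2.val).val.map fun p => cdist p.1 p.2

/-- Two subsets are homometric if they have the same self difference multiset. -/
def Homometric {N : ℕ} (A B : Finset (ZMod N)) : Prop :=
  selfDiffMS A = selfDiffMS B

/-- `σ : ZMod N → ZMod N` is given by the action of an element of the dihedral
group `D_{2N}`, generated by the rotation `i ↦ i + 1` and the reflection `i ↦ -i`. -/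
def IsDihedral {N : ℕ} (σ : ZMod N → ZMod N) : Prop :=
  (∃ k : ZMod N, ∀ i, σ i = i + k) ∨ (∃ k : ZMod N, ∀ i, σ i = -i + k)

/-- Two subsets are equivalent if one is the image of the other under `D_{2N}`. -/
def EquivSets {N : ℕ} (A B : Finset (ZMod N)) : Prop :=
  ∃ σ : ZMod N → ZMod N, IsDihedral σ ∧ B = A.image σ

/-- An ordered partition of `[0, N-1]`: pairwise disjoint sets covering everything. -/
def IsPartitionOf {N K : ℕ} [NeZero N] (A : Fin K → Finset (ZMod N)) : Prop :=
  (∀ i j, i ≠ j → Disjoint (A i) (A j)) ∧ Finset.univ.biUnion A = Finset.univ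

/-- Two ordered partitions are homometric if `A i - A j = B i - B j` for all pairs. -/
def HomometricPart {N K : ℕ} (A B : Fin K → Finset (ZMod N)) : Prop :=
  ∀ i j, diffMS (A i) (A j) = diffMS (B i) (B j)

/-- Two ordered partitions are equivalent if a single dihedral element maps one to the other. -/
def EquivPart {N K : ℕ} (A B : Fin K → Finset (ZMod N)) : Prop :=
  ∃ σ : ZMod N → ZMod N, IsDihedral σ ∧ ∀ i, B i = (A i).image σ

/-- Two ordered partitions are pseudo-equivalent if each part is mapped by some
(possibly different) dihedral element. -/
def PseudoEquivPart {N K : ℕ} (A B : Fin K → Finset (ZMod N)) : Prop :=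
  ∀ i, ∃ σ : ZMod N → ZMod N, IsDihedral σ ∧ B i = (A i).image σ

/-- The periodic autocorrelation `a_x[ℓ] = ∑ x[n] x[n+ℓ]`. -/
noncomputable def autocorr {N : ℕ} [NeZero N] (x : ZMod N → ℝ) (ℓ : ZMod N) : ℝ :=
  ∑ n : ZMod N, x n * x (n + ℓ)

open Classical in
/-- The level set `{i : x[i] = a}` of a signal. -/
noncomputable def levelSet {N : ℕ} [NeZero N] (x : ZMod N → ℝ) (a : ℝ) : Finset (ZMod N) :=
  Finset.univ.filter fun i => x i = a

/-!
Count ordered pairs instead of unordered ones: `A - A` taken over all ordered pairs is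
`diffMS A A`, and `selfDiffMS A` counted twice is `diffMS A A` plus `#A` zeros from the diagonal,
so `A` and `B` are homometric iff `diffMS A A = diffMS B B`. Splitting `univ = A ⊔ Aᶜ` in both
arguments gives `diffMS Aᶜ Aᶜ + diffMS A univ + diffMS univ A = diffMS univ univ + diffMS A A`,
and by translation invariance of `cdist`, `diffMS A univ` is `#A` copies of the multiset of
distances from `0`. Hence `diffMS Aᶜ Aᶜ` is determined by `diffMS A A` and `#A`.
-/

open Finset

section
variable {N : ℕ}

lemma cdist_comm (i j : ZMod N) : cdist i j = cdist j i := min_comm _ _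

lemma cdist_self (i : ZMod N) : cdist i i = 0 := by simp [cdist]

lemma cdist_eq_cdist_zero_sub (i j : ZMod N) : cdist i j = cdist 0 (j - i) := by
  rw [cdist, cdist, zero_sub, neg_sub, sub_zero]

lemma diffMS_comm (A B : Finset (ZMod N)) : diffMS A B = diffMS B A := by
  rw [diffMS, diffMS, ← map_swap_product, map_val, Multiset.map_map]
  simp only [Function.comp_def, Function.Embedding.coeFn_mk, Prod.fst_swap, Prod.snd_swap,
    cdist_comm]

lemma diffMS_eq_sum (A B : Finset (ZMod N)) :
    diffMS A B = ∑ i ∈ A, B.val.map (cdist i) := by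
  rw [diffMS, product_val]
  change Multiset.map _ (A.val.bind fun i => B.val.map (Prod.mk i)) = _
  simp only [Multiset.map_bind, Multiset.map_map]
  rfl

lemma card_diffMS (A B : Finset (ZMod N)) : Multiset.card (diffMS A B) = #A * #B := by
  rw [diffMS, Multiset.card_map, card_val, card_product]

lemma card_eq_of_diffMS_self_eq {A B : Finset (ZMod N)} (h : diffMS A A = diffMS B B) :
    #A = #B :=
  Nat.mul_self_inj.1 (by rw [← card_diffMS, ← card_diffMS, h])

lemma selfDiffMS_eq_map_filter_ge (A : Finset (ZMod N)) :
    selfDiffMS A =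
      ((A ×ˢ A).filter fun p => p.2.val ≤ p.1.val).val.map fun p => cdist p.1 p.2 := by
  rw [selfDiffMS]
  conv_lhs => rw [← map_swap_product, filter_map, map_val, Multiset.map_map]
  simp only [Function.comp_def, Function.Embedding.coeFn_mk, Prod.fst_swap, Prod.snd_swap,
    cdist_comm]

lemma map_cdist_diag (A : Finset (ZMod N)) :
    A.diag.val.map (fun p => cdist p.1 p.2) = Multiset.replicate #A 0 := by
  rw [Multiset.eq_replicate, Multiset.card_map, card_val, diag_card]
  refine ⟨rfl, ?_⟩
  simp only [Multiset.mem_map, mem_val, mem_diag]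
  rintro _ ⟨⟨i, j⟩, ⟨-, rfl : i = j⟩, rfl⟩
  exact cdist_self i

end

section
variable {N : ℕ} [NeZero N]

lemma selfDiffMS_add_selfDiffMS (A : Finset (ZMod N)) :
    selfDiffMS A + selfDiffMS A = diffMS A A + Multiset.replicate #A 0 := by
  set f : ZMod N × ZMod N → ℕ := fun p => cdist p.1 p.2
  have hdisj : Disjoint ((A ×ˢ A).filter fun p => ¬ p.1.val ≤ p.2.val) A.diag := by
    refine disjoint_left.2 fun p hp hd => ?_
    rw [mem_filter] at hp
    exact hp.2 (congrArg ZMod.val (mem_diag.1 hd).2).le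
  have hge : ((A ×ˢ A).filter fun p => p.2.val ≤ p.1.val) =
      ((A ×ˢ A).filter fun p => ¬ p.1.val ≤ p.2.val).disjUnion A.diag hdisj := by
    ext ⟨i, j⟩
    rcases eq_or_ne i j with rfl | hij
    · simp
    · have hval : i.val ≠ j.val := (ZMod.val_injective N).ne hij
      simp only [disjUnion_eq_union, mem_filter, mem_union, mem_diag, hij, and_false, or_false]
      exact and_congr_right fun _ => by omega
  calc selfDiffMS A + selfDiffMS A
      = ((A ×ˢ A).filter fun p => p.1.val ≤ p.2.val).val.map f +
          (((A ×ˢ A).filter fun p => ¬ p.1.val ≤ p.2.val).val.map f + A.diag.val.map f) := by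
        nth_rw 2 [selfDiffMS_eq_map_filter_ge]
        rw [hge, ← Multiset.map_add]
        rfl
    _ = diffMS A A + Multiset.replicate #A 0 := by
        rw [map_cdist_diag, ← add_assoc, ← Multiset.map_add, filter_val, filter_val,
          Multiset.filter_add_not]
        rfl

lemma homometric_iff_diffMS_self_eq {A B : Finset (ZMod N)} :
    Homometric A B ↔ diffMS A A = diffMS B B := by
  have hA := selfDiffMS_add_selfDiffMS A
  have hB := selfDiffMS_add_selfDiffMS B
  constructor
  · intro h
    rw [Homometric] at h
    have hcard : #A = #B := by
      have := congrArg Multiset.card (hA.symm.trans (h ▸ hB))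
      simp only [Multiset.card_add, card_diffMS, Multiset.card_replicate] at this
      nlinarith
    rw [h, hB, hcard] at hA
    exact (add_right_cancel hA).symm
  · intro h
    rw [h, card_eq_of_diffMS_self_eq h, ← hB] at hA
    refine Multiset.ext.2 fun d => ?_
    have := congrArg (Multiset.count d) hA
    simp only [Multiset.count_add] at this
    omega

lemma diffMS_add_diffMS_compl_left (A B : Finset (ZMod N)) :
    diffMS A B + diffMS Aᶜ B = diffMS univ B := by
  simp only [diffMS_eq_sum, sum_add_sum_compl]

lemma diffMS_add_diffMS_compl_right (A B : Finset (ZMod N)) :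
    diffMS A B + diffMS A Bᶜ = diffMS A univ := by
  simp only [diffMS_comm A, diffMS_add_diffMS_compl_left]

lemma diffMS_compl_self_add (A : Finset (ZMod N)) :
    diffMS Aᶜ Aᶜ + (diffMS A univ + diffMS univ A) =
      diffMS (univ : Finset (ZMod N)) univ + diffMS A A := by
  rw [← diffMS_add_diffMS_compl_right univ A, ← diffMS_add_diffMS_compl_left A Aᶜ,
    ← diffMS_add_diffMS_compl_left A A, ← diffMS_add_diffMS_compl_right A A]
  abel

lemma map_cdist_univ_val (i : ZMod N) :
    (univ : Finset (ZMod N)).val.map (cdist i) = univ.val.map (cdist (0 : ZMod N)) := by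
  conv_lhs => rw [← Multiset.map_univ_val_equiv (Equiv.addRight i), Multiset.map_map]
  simp only [Function.comp_def, Equiv.coe_addRight, cdist_eq_cdist_zero_sub i,
    add_sub_cancel_right]

lemma diffMS_univ_right (A : Finset (ZMod N)) :
    diffMS A univ = #A • univ.val.map (cdist (0 : ZMod N)) := by
  rw [diffMS_eq_sum, sum_congr rfl fun i _ => map_cdist_univ_val i, sum_const]

lemma Homometric.compl {A B : Finset (ZMod N)} (h : Homometric A B) : Homometric Aᶜ Bᶜ := by
  rw [homometric_iff_diffMS_self_eq] at h ⊢
  have hcard := card_eq_of_diffMS_self_eq h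
  have hU : diffMS A univ + diffMS univ A = diffMS B univ + diffMS univ B := by
    rw [diffMS_comm univ, diffMS_comm univ, diffMS_univ_right, diffMS_univ_right, hcard]
  apply add_right_cancel (b := diffMS A univ + diffMS univ A)
  rw [diffMS_compl_self_add, hU, diffMS_compl_self_add, h]

end

/-- Patterson's theorem. -/
theorem patterson (N : ℕ) [NeZero N] (A B : Finset (ZMod N)) :
    Homometric A B ↔ Homometric Aᶜ Bᶜ :=
  ⟨Homometric.compl, fun h => by simpa only [compl_compl] using h.compl⟩
end

section
/- Let N ≥ 1, let α, β be any real numbers, and let x, x' ∈ {α, β}^N. Write S_α(x) = {i : x[i] = α} and S_β(x) = {j : x[j] = β}, and similarly for x'. If the ordered partitions (S_α(x), S_β(x)) and (S_α(x'), S_β(x')) of [0,N-1] are homometric, then x and x' have the same periodic autocorrelation: a_x = a_{x'}. -/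
open Finset

noncomputable def pcnt {N : ℕ} (A B : Finset (ZMod N)) (ℓ : ZMod N) : ℕ :=
  ((A ×ˢ B).filter fun p => p.2 - p.1 = ℓ).card

lemma min_val_aux {N : ℕ} [NeZero N] {k ℓ : ZMod N}
    (h : min k.val (-k).val = min ℓ.val (-ℓ).val) : k = ℓ ∨ k = -ℓ := by
  rcases min_choice k.val (-k).val with h1 | h1 <;>
    rcases min_choice (ℓ.val) ((-ℓ).val) with h2 | h2 <;>
    rw [h1] at h <;> rw [h2] at h
  · exact Or.inl (ZMod.val_injective N h)
  · exact Or.inr (ZMod.val_injective N h)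
  · have h3 : -k = ℓ := ZMod.val_injective N h
    exact Or.inr (by rw [← h3, neg_neg])
  · exact Or.inl (neg_injective (ZMod.val_injective N h))

lemma cdist_eq_iff {N : ℕ} [NeZero N] (i j ℓ : ZMod N) :
    cdist i j = cdist ℓ 0 ↔ (j - i = ℓ ∨ j - i = -ℓ) := by
  unfold cdist
  rw [sub_zero, zero_sub]
  have hij : i - j = -(j - i) := by ring
  rw [hij, min_comm (-(j-i)).val (j-i).val]
  constructor
  · exact min_val_aux
  · rintro (h | h)
    · rw [h]
    · rw [h, neg_neg, min_comm]

lemma key {N : ℕ} [NeZero N] {A B A' B' : Finset (ZMod N)}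
    (hd : diffMS A B = diffMS A' B') (ℓ : ZMod N) :
    pcnt A B ℓ + pcnt A B (-ℓ) = pcnt A' B' ℓ + pcnt A' B' (-ℓ) := by
  classical
  have hc : ∀ (C D : Finset (ZMod N)),
      Multiset.count (cdist ℓ 0) (diffMS C D)
        = ((C ×ˢ D).filter fun p => p.2 - p.1 = ℓ ∨ p.2 - p.1 = -ℓ).card := by
    intro C D
    unfold diffMS
    rw [Multiset.count_map]
    rw [show ((C ×ˢ D).filter fun p => p.2 - p.1 = ℓ ∨ p.2 - p.1 = -ℓ).card
        = Multiset.card (Multiset.filter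
            (fun p : ZMod N × ZMod N => p.2 - p.1 = ℓ ∨ p.2 - p.1 = -ℓ) (C ×ˢ D).val) from rfl]
    congr 1
    apply Multiset.filter_congr
    intro p _
    rw [eq_comm, cdist_eq_iff]
  have hcount := congrArg (Multiset.count (cdist ℓ 0)) hd
  rw [hc A B, hc A' B'] at hcount
  rcases eq_or_ne ℓ (-ℓ) with he | hne
  · have hsimp : ∀ (C D : Finset (ZMod N)),
        ((C ×ˢ D).filter fun p => p.2 - p.1 = ℓ ∨ p.2 - p.1 = -ℓ).card = pcnt C D ℓ := by
      intro C D
      unfold pcnt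
      congr 1
      apply Finset.filter_congr
      intro p _
      constructor
      · rintro (h | h)
        · exact h
        · rw [h, ← he]
      · exact Or.inl
    rw [hsimp, hsimp] at hcount
    rw [← he, hcount]
  · have hsimp : ∀ (C D : Finset (ZMod N)),
        ((C ×ˢ D).filter fun p => p.2 - p.1 = ℓ ∨ p.2 - p.1 = -ℓ).card
          = pcnt C D ℓ + pcnt C D (-ℓ) := by
      intro C D
      unfold pcnt
      rw [Finset.filter_or]
      apply Finset.card_union_of_disjoint
      rw [Finset.disjoint_left]
      intro p hp hq
      simp only [Finset.mem_filter] at hp hq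
      exact hne (hp.2 ▸ hq.2)
    rw [hsimp, hsimp] at hcount
    exact hcount

lemma pcnt_level {N : ℕ} [NeZero N] (x : ZMod N → ℝ) (a b : ℝ) (ℓ : ZMod N) :
    pcnt (levelSet x a) (levelSet x b) ℓ
      = (Finset.univ.filter fun n : ZMod N => x n = a ∧ x (n + ℓ) = b).card := by
  classical
  unfold pcnt levelSet
  apply Finset.card_bij (fun p _ => p.1)
  · intro p hp
    simp only [Finset.mem_filter, Finset.mem_product, Finset.mem_univ, true_and] at hp ⊢
    obtain ⟨⟨h1, h2⟩, h3⟩ := hp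
    refine ⟨h1, ?_⟩
    have : p.2 = p.1 + ℓ := by rw [← h3]; ring
    rwa [← this]
  · intro p hp q hq hpq
    simp only [Finset.mem_filter, Finset.mem_product] at hp hq
    have h1 : p.2 = p.1 + ℓ := by rw [← hp.2]; ring
    have h2 : q.2 = q.1 + ℓ := by rw [← hq.2]; ring
    exact Prod.ext hpq (by rw [h1, h2, hpq])
  · intro n hn
    simp only [Finset.mem_filter, Finset.mem_univ, true_and] at hn
    exact ⟨(n, n + ℓ), by simp [Finset.mem_filter, Finset.mem_product, hn.1, hn.2], rfl⟩

lemma autocorr_eq {N : ℕ} [NeZero N] {α β : ℝ} (hab : α ≠ β) (x : ZMod N → ℝ)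
    (hx : ∀ n, x n = α ∨ x n = β) (ℓ : ZMod N) :
    autocorr x ℓ = α * α * (pcnt (levelSet x α) (levelSet x α) ℓ : ℝ)
      + α * β * (pcnt (levelSet x α) (levelSet x β) ℓ : ℝ)
      + β * α * (pcnt (levelSet x β) (levelSet x α) ℓ : ℝ)
      + β * β * (pcnt (levelSet x β) (levelSet x β) ℓ : ℝ) := by
  classical
  unfold autocorr
  rw [pcnt_level, pcnt_level, pcnt_level, pcnt_level]
  have hpt : ∀ n : ZMod N, x n * x (n + ℓ)
      = α * α * (if x n = α ∧ x (n + ℓ) = α then (1:ℝ) else 0)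
      + α * β * (if x n = α ∧ x (n + ℓ) = β then (1:ℝ) else 0)
      + β * α * (if x n = β ∧ x (n + ℓ) = α then (1:ℝ) else 0)
      + β * β * (if x n = β ∧ x (n + ℓ) = β then (1:ℝ) else 0) := by
    intro n
    rcases hx n with h1 | h1 <;> rcases hx (n + ℓ) with h2 | h2 <;>
      simp [h1, h2, hab, hab.symm]
  simp_rw [hpt]
  rw [Finset.sum_add_distrib, Finset.sum_add_distrib, Finset.sum_add_distrib,
    ← Finset.mul_sum, ← Finset.mul_sum, ← Finset.mul_sum, ← Finset.mul_sum,
    Finset.sum_boole, Finset.sum_boole, Finset.sum_boole, Finset.sum_boole]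

lemma autocorr_neg {N : ℕ} [NeZero N] (x : ZMod N → ℝ) (ℓ : ZMod N) :
    autocorr x (-ℓ) = autocorr x ℓ := by
  unfold autocorr
  rw [← Equiv.sum_comp (Equiv.addRight ℓ) (fun n => x n * x (n + -ℓ))]
  apply Finset.sum_congr rfl
  intro n _
  simp [mul_comm]

/-- homometric level-set partitions imply equal autocorrelations. -/
theorem homometric_partition_implies_autocorr (N : ℕ) [NeZero N] (α β : ℝ)
    (x x' : ZMod N → ℝ)
    (hx : ∀ n, x n = α ∨ x n = β) (hx' : ∀ n, x' n = α ∨ x' n = β)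
    (h : HomometricPart ![levelSet x α, levelSet x β] ![levelSet x' α, levelSet x' β]) :
    autocorr x = autocorr x' := by
  by_cases hab : α = β
  · have hx1 : ∀ n, x n = α := fun n => (hx n).elim id (fun hn => hn.trans hab.symm)
    have hx'1 : ∀ n, x' n = α := fun n => (hx' n).elim id (fun hn => hn.trans hab.symm)
    funext ℓ
    unfold autocorr
    simp [hx1, hx'1]
  · funext ℓ
    have h00 := h 0 0
    have h01 := h 0 1
    have h10 := h 1 0
    have h11 := h 1 1
    simp only [Matrix.cons_val_zero, Matrix.cons_val_one, Matrix.head_cons] at h00 h01 h10 h11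
    have k00 := key h00 ℓ
    have k01 := key h01 ℓ
    have k10 := key h10 ℓ
    have k11 := key h11 ℓ
    have e1 : autocorr x ℓ + autocorr x (-ℓ) = autocorr x' ℓ + autocorr x' (-ℓ) := by
      rw [autocorr_eq hab x hx ℓ, autocorr_eq hab x hx (-ℓ),
          autocorr_eq hab x' hx' ℓ, autocorr_eq hab x' hx' (-ℓ)]
      have c00 : ((pcnt (levelSet x α) (levelSet x α) ℓ : ℝ) + (pcnt (levelSet x α) (levelSet x α) (-ℓ) : ℝ))
          = ((pcnt (levelSet x' α) (levelSet x' α) ℓ : ℝ) + (pcnt (levelSet x' α) (levelSet x' α) (-ℓ) : ℝ)) := by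
        exact_mod_cast congrArg (fun n : ℕ => (n : ℝ)) k00
      have c01 : ((pcnt (levelSet x α) (levelSet x β) ℓ : ℝ) + (pcnt (levelSet x α) (levelSet x β) (-ℓ) : ℝ))
          = ((pcnt (levelSet x' α) (levelSet x' β) ℓ : ℝ) + (pcnt (levelSet x' α) (levelSet x' β) (-ℓ) : ℝ)) := by
        exact_mod_cast congrArg (fun n : ℕ => (n : ℝ)) k01
      have c10 : ((pcnt (levelSet x β) (levelSet x α) ℓ : ℝ) + (pcnt (levelSet x β) (levelSet x α) (-ℓ) : ℝ))
          = ((pcnt (levelSet x' β) (levelSet x' α) ℓ : ℝ) + (pcnt (levelSet x' β) (levelSet x' α) (-ℓ) : ℝ)) := by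
        exact_mod_cast congrArg (fun n : ℕ => (n : ℝ)) k10
      have c11 : ((pcnt (levelSet x β) (levelSet x β) ℓ : ℝ) + (pcnt (levelSet x β) (levelSet x β) (-ℓ) : ℝ))
          = ((pcnt (levelSet x' β) (levelSet x' β) ℓ : ℝ) + (pcnt (levelSet x' β) (levelSet x' β) (-ℓ) : ℝ)) := by
        exact_mod_cast congrArg (fun n : ℕ => (n : ℝ)) k11
      linear_combination (α * α) * c00 + (α * β) * c01 + (β * α) * c10 + (β * β) * c11
    rw [autocorr_neg x ℓ, autocorr_neg x' ℓ] at e1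
    linarith
end

section
/- Let N ≥ 1, K ≥ 1, and let α_1, …, α_K be distinct real numbers such that the K(K+1)/2 products α_i·α_j for 1 ≤ i ≤ j ≤ K are linearly independent over ℚ. For signals x, x' ∈ {α_1, …, α_K}^N, with level sets A_k(x) = {n : x[n] = α_k} and A_k(x') = {n : x'[n] = α_k}, the autocorrelations satisfy a_x = a_{x'} if and only if the ordered partitions (A_1(x), …, A_K(x)) and (A_1(x'), …, A_K(x')) of [0,N-1] are homometric. -/
/-! Write the signals as `α ∘ κ` for colourings `κ : ZMod N → Fin K`, and let `cᵢⱼ(ℓ)` be the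
number of `n` with `κ n = i` and `κ (n + ℓ) = j`. Then `a_x[ℓ] = ∑ᵢⱼ cᵢⱼ(ℓ) αᵢαⱼ`, and since
`cⱼᵢ(ℓ) = cᵢⱼ(-ℓ)`, also `2 a_x[ℓ] = ∑ᵢⱼ (cᵢⱼ(ℓ) + cⱼᵢ(ℓ)) αᵢαⱼ` with coefficients symmetric in
`i, j`. By the ℚ-independence of the products `αᵢαⱼ` (`i ≤ j`), equal autocorrelations therefore
mean equal symmetrised counts `cᵢⱼ(ℓ) + cᵢⱼ(-ℓ)`. These are exactly the data of the multiset
`Aᵢ − Aⱼ`, because the cyclic distance of a lag identifies precisely `ℓ` and `-ℓ`. -/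

open Finset

theorem Fintype.sum_sum_eq_sum_le_of_symm {ι M : Type*} [Fintype ι] [LinearOrder ι]
    [AddCommMonoid M] (w : ι → ι → M) (hw : ∀ i j, w i j = w j i) :
    ∑ i, ∑ j, w i j =
      ∑ p : {p : ι × ι // p.1 ≤ p.2}, (if p.1.1 = p.1.2 then 1 else 2) • w p.1.1 p.1.2 := by
  have hswap : ∑ q : ι × ι with ¬ q.1 ≤ q.2, w q.1 q.2 = ∑ q : ι × ι with q.1 < q.2, w q.1 q.2 :=
    sum_nbij' Prod.swap Prod.swap (by simp) (by simp) (by simp) (by simp) fun q _ => hw _ _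
  have hlt : ∑ q : ι × ι with q.1 < q.2, w q.1 q.2 =
      ∑ q : ι × ι with q.1 ≤ q.2, if q.1 = q.2 then 0 else w q.1 q.2 := by
    rw [sum_ite, sum_const_zero, zero_add, filter_filter]
    simp_rw [lt_iff_le_and_ne]
  rw [← Fintype.sum_prod_type' w,
    ← sum_filter_add_sum_filter_not univ (fun q : ι × ι => q.1 ≤ q.2) fun q => w q.1 q.2, hswap,
    hlt, ← sum_add_distrib, ← sum_subtype_eq_sum_filter, subtype_univ]
  refine Fintype.sum_congr _ _ fun p => ?_
  split_ifs <;> simp [two_nsmul]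

theorem LinearIndependent.sum_sum_smul_eq_iff_of_symm {R M ι : Type*} [Semiring R]
    [IsAddTorsionFree R] [AddCommMonoid M] [Module R M] [Fintype ι] [LinearOrder ι]
    {v : ι → ι → M} (hli : LinearIndependent R fun p : {p : ι × ι // p.1 ≤ p.2} => v p.1.1 p.1.2)
    (hv : ∀ i j, v i j = v j i) {s t : ι → ι → R} (hs : ∀ i j, s i j = s j i)
    (ht : ∀ i j, t i j = t j i) :
    ∑ i, ∑ j, s i j • v i j = ∑ i, ∑ j, t i j • v i j ↔ s = t := by
  refine ⟨fun h => ?_, fun h => h ▸ rfl⟩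
  rw [Fintype.sum_sum_eq_sum_le_of_symm _ fun i j => by rw [hs, hv],
    Fintype.sum_sum_eq_sum_le_of_symm _ fun i j => by rw [ht, hv]] at h
  simp only [← smul_assoc] at h
  have hle : ∀ i j, i ≤ j → s i j = t i j := fun i j hij => by
    have hp := Fintype.linearIndependent_iffₛ.mp hli _ _ h ⟨(i, j), hij⟩
    exact IsAddTorsionFree.nsmul_right_injective (by split_ifs <;> simp) hp
  ext i j
  rcases le_total i j with hij | hji
  · exact hle i j hij
  · rw [hs, ht, hle j i hji]

theorem Multiset.map_eq_map_iff_add_map_eq {α β : Type*} {σ : α → α}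
    (hσ : Function.Involutive σ) {f : α → β} (hf : ∀ a b, f a = f b ↔ a = b ∨ a = σ b)
    {M M' : Multiset α} : M.map f = M'.map f ↔ M + M.map σ = M' + M'.map σ := by
  constructor
  · -- `{a, σ a}` depends only on `f a`, so `M + M.map σ` can be read off `M.map f`.
    have hfac : (fun a => ({a, σ a} : Multiset α)).FactorsThrough f := fun a b hab => by
      rcases (hf a b).mp hab with rfl | rfl
      · rfl
      · show ({σ b, σ (σ b)} : Multiset α) = {b, σ b}
        rw [hσ b, Multiset.pair_comm]
    have key : ∀ L : Multiset α,
        L + L.map σ = (L.map f).bind (Function.extend f (fun a => {a, σ a}) 0) := fun L => by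
      rw [Multiset.bind_map, Multiset.bind_congr fun a _ => hfac.extend_apply 0 a]
      simp only [Multiset.insert_eq_cons, Multiset.bind_cons, Multiset.bind_singleton,
        Multiset.map_id']
    intro h
    rw [key, key, h]
  · classical
    intro h
    have hfσ : ∀ a, f (σ a) = f a := fun a => (hf (σ a) a).mpr (Or.inr rfl)
    have h2 : M.map f + M.map f = M'.map f + M'.map f := by
      simpa [Multiset.map_add, Multiset.map_map, Function.comp_def, hfσ] using
        congr_arg (Multiset.map f) h
    refine Multiset.ext.mpr fun b => ?_
    have := congr_arg (Multiset.count b) h2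
    simp only [Multiset.count_add] at this
    omega

section Differences

variable {G : Type*} [AddCommGroup G]

def differences (A B : Finset G) : Multiset G :=
  (A ×ˢ B).val.map fun p => p.2 - p.1

theorem count_differences [DecidableEq G] (A B : Finset G) (g : G) :
    (differences A B).count g = #{a ∈ A | a + g ∈ B} := by
  rw [differences, Multiset.count_map, ← Finset.filter_val, Finset.card_val]
  refine card_nbij' Prod.fst (fun a => (a, a + g)) ?_ (fun a ha => by simp_all) ?_
    fun _ _ => rfl
  all_goals
    rintro ⟨a, b⟩ h
    obtain ⟨⟨ha, hb⟩, rfl⟩ : (a ∈ A ∧ b ∈ B) ∧ g = b - a := by simpa [eq_comm] using h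
    simp [ha, hb]

theorem map_neg_differences (A B : Finset G) :
    (differences A B).map Neg.neg = differences B A := by
  rw [differences, differences, Multiset.map_map, ← Finset.map_swap_product A B, Finset.map_val,
    Multiset.map_map]
  simp [Function.comp_def]

end Differences

theorem cdist_eq_natAbs_valMinAbs {N : ℕ} [NeZero N] (i j : ZMod N) :
    cdist i j = (j - i).valMinAbs.natAbs := by
  rw [ZMod.valMinAbs_natAbs_eq_min, cdist, ← neg_sub j i, ZMod.neg_val]
  split_ifs with h <;> simp [h, min_comm]

theorem diffMS_eq_map_differences {N : ℕ} [NeZero N] (A B : Finset (ZMod N)) :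
    diffMS A B = (differences A B).map fun g => g.valMinAbs.natAbs := by
  simp only [diffMS, differences, Multiset.map_map, Function.comp_def, cdist_eq_natAbs_valMinAbs]

theorem diffMS_eq_diffMS_iff {N : ℕ} [NeZero N] (A B A' B' : Finset (ZMod N)) :
    diffMS A B = diffMS A' B' ↔
      differences A B + differences B A = differences A' B' + differences B' A' := by
  rw [diffMS_eq_map_differences, diffMS_eq_map_differences, ← map_neg_differences A B,
    ← map_neg_differences A' B']
  exact Multiset.map_eq_map_iff_add_map_eq neg_involutive fun a b =>
    ZMod.natAbs_valMinAbs_eq_natAbs_valMinAbs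

section Coloring

variable {N : ℕ} [NeZero N] {ι : Type*} [Fintype ι] [DecidableEq ι]

def classDifferences (κ : ZMod N → ι) (i j : ι) : Multiset (ZMod N) :=
  differences {n | κ n = i} {n | κ n = j}

theorem autocorr_comp (α : ι → ℝ) (κ : ZMod N → ι) (ℓ : ZMod N) :
    autocorr (α ∘ κ) ℓ = ∑ i, ∑ j, (classDifferences κ i j).count ℓ • (α i * α j) := by
  calc autocorr (α ∘ κ) ℓ
      = ∑ q : ι × ι, ∑ n with (κ n, κ (n + ℓ)) = q, α q.1 * α q.2 :=
        (sum_fiberwise' univ (fun n => (κ n, κ (n + ℓ))) fun q : ι × ι => α q.1 * α q.2).symm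
    _ = ∑ q : ι × ι, (classDifferences κ q.1 q.2).count ℓ • (α q.1 * α q.2) :=
        Fintype.sum_congr _ _ fun q => by
          rw [sum_const, classDifferences, count_differences]
          congr 2
          ext n
          simp [Prod.ext_iff]
    _ = _ := Fintype.sum_prod_type' fun i j => (classDifferences κ i j).count ℓ • (α i * α j)

theorem two_mul_autocorr_comp (α : ι → ℝ) (κ : ZMod N → ι) (ℓ : ZMod N) :
    2 * autocorr (α ∘ κ) ℓ = ∑ i, ∑ j,
      (classDifferences κ i j + classDifferences κ j i).count ℓ • (α i * α j) := by
  have hswap : autocorr (α ∘ κ) ℓ = ∑ i, ∑ j, (classDifferences κ j i).count ℓ • (α i * α j) := by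
    rw [autocorr_comp, sum_comm]
    exact Fintype.sum_congr _ _ fun i => Fintype.sum_congr _ _ fun j => by rw [mul_comm]
  rw [two_mul]
  nth_rw 1 [autocorr_comp]
  rw [hswap, ← sum_add_distrib]
  refine Fintype.sum_congr _ _ fun i => ?_
  rw [← sum_add_distrib]
  refine Fintype.sum_congr _ _ fun j => ?_
  rw [Multiset.count_add, add_smul]

theorem autocorr_comp_eq_iff [LinearOrder ι] {α : ι → ℝ}
    (hli : LinearIndependent ℕ fun p : {p : ι × ι // p.1 ≤ p.2} => α p.1.1 * α p.1.2)
    (κ κ' : ZMod N → ι) :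
    autocorr (α ∘ κ) = autocorr (α ∘ κ') ↔ ∀ i j,
      classDifferences κ i j + classDifferences κ j i =
        classDifferences κ' i j + classDifferences κ' j i := by
  calc autocorr (α ∘ κ) = autocorr (α ∘ κ')
      ↔ ∀ ℓ, 2 * autocorr (α ∘ κ) ℓ = 2 * autocorr (α ∘ κ') ℓ := by simp [funext_iff]
    _ ↔ ∀ ℓ, (fun i j => (classDifferences κ i j + classDifferences κ j i).count ℓ) =
          fun i j => (classDifferences κ' i j + classDifferences κ' j i).count ℓ := by
        refine forall_congr' fun ℓ => ?_
        rw [two_mul_autocorr_comp, two_mul_autocorr_comp]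
        exact hli.sum_sum_smul_eq_iff_of_symm (v := fun i j => α i * α j) (fun i j => mul_comm _ _)
          (fun i j => by rw [add_comm]) fun i j => by rw [add_comm]
    _ ↔ _ := by
        simp only [funext_iff, Multiset.ext]
        exact ⟨fun h i j ℓ => h ℓ i j, fun h ℓ i j => h i j ℓ⟩

end Coloring

theorem homometricPart_levelSet_comp_iff {K : ℕ} {α : Fin K → ℝ} (hα : Function.Injective α)
    {N : ℕ} [NeZero N] (κ κ' : ZMod N → Fin K) :
    HomometricPart (fun k => levelSet (α ∘ κ) (α k)) (fun k => levelSet (α ∘ κ') (α k)) ↔ ∀ i j,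
      classDifferences κ i j + classDifferences κ j i =
        classDifferences κ' i j + classDifferences κ' j i := by
  have hlevel : ∀ (κ : ZMod N → Fin K) k,
      levelSet (α ∘ κ) (α k) = ({n | κ n = k} : Finset (ZMod N)) := fun κ k => by
    ext n
    simp [levelSet, hα.eq_iff]
  simp only [HomometricPart, hlevel, diffMS_eq_diffMS_iff]
  rfl

theorem finite_alphabet_phase_retrieval_general (N K : ℕ) [NeZero N]
    (α : Fin K → ℝ) (hdist : Function.Injective α)
    (hgen : LinearIndependent ℚ
      (fun p : {p : Fin K × Fin K // p.1 ≤ p.2} => α p.1.1 * α p.1.2))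
    (x x' : ZMod N → ℝ)
    (hx : ∀ n, ∃ k, x n = α k) (hx' : ∀ n, ∃ k, x' n = α k) :
    autocorr x = autocorr x' ↔
      HomometricPart (fun k => levelSet x (α k)) (fun k => levelSet x' (α k)) := by
  choose κ hκ using hx
  choose κ' hκ' using hx'
  obtain rfl : x = α ∘ κ := funext hκ
  obtain rfl : x' = α ∘ κ' := funext hκ'
  rw [autocorr_comp_eq_iff (hgen.restrict_scalars' (R := ℕ)),
    homometricPart_levelSet_comp_iff hdist]

/-- finite-alphabet phase retrieval for a generic alphabet. -/
theorem finite_alphabet_phase_retrieval (N K : ℕ) [NeZero N] (hK : 1 ≤ K)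
    (α : Fin K → ℝ) (hdist : Function.Injective α)
    (hgen : LinearIndependent ℚ
      (fun p : {p : Fin K × Fin K // p.1 ≤ p.2} => α p.1.1 * α p.1.2))
    (x x' : ZMod N → ℝ)
    (hx : ∀ n, ∃ k, x n = α k) (hx' : ∀ n, ∃ k, x' n = α k) :
    autocorr x = autocorr x' ↔
      HomometricPart (fun k => levelSet x (α k)) (fun k => levelSet x' (α k)) :=
  finite_alphabet_phase_retrieval_general N K α hdist hgen x x' hx hx'
end

section
/- (Sparse finite-alphabet phase retrieval) Let N ≥ 1, K ≥ 2, and consider the alphabet {α_1, α_2, …, α_K} where α_1 = 0 and α_2, …, α_K are distinct nonzero reals such that the products α_i·α_j for 2 ≤ i ≤ j ≤ K are linearly independent over ℚ. For signals x, x' with entries in this alphabet, with level sets A_k(x) = {n : x[n] = α_k} and A_k(x') = {n : x'[n] = α_k}, the autocorrelations satisfy a_x = a_{x'} if and only if the ordered partitions (A_1(x), …, A_K(x)) and (A_1(x'), …, A_K(x')) of [0,N-1] are homometric. -/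
set_option linter.unusedSectionVars false

namespace SparseAux

open Finset

variable {N : ℕ} [NeZero N]

/-- signed correlation count -/
def cc (A B : Finset (ZMod N)) (ℓ : ZMod N) : ℕ :=
  ((A ×ˢ B).filter fun p => p.1 - p.2 = ℓ).card

lemma delta_eq_delta_iff (ℓ d : ZMod N) :
    min ℓ.val (-ℓ).val = min d.val (-d).val ↔ d = ℓ ∨ d = -ℓ := by
  have hv1 : ℓ.val < N := ZMod.val_lt ℓ
  have hv2 : d.val < N := ZMod.val_lt d
  have e1 : (-ℓ).val = if ℓ = 0 then 0 else N - ℓ.val := ZMod.neg_val ℓ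
  have e2 : (-d).val = if d = 0 then 0 else N - d.val := ZMod.neg_val d
  have h01 : ℓ = 0 ↔ ℓ.val = 0 := (ZMod.val_eq_zero ℓ).symm
  have h02 : d = 0 ↔ d.val = 0 := (ZMod.val_eq_zero d).symm
  have hiff1 : d = ℓ ↔ d.val = ℓ.val :=
    ⟨fun h => by rw [h], fun h => ZMod.val_injective N h⟩
  have hiff2 : d = -ℓ ↔ d.val = (-ℓ).val :=
    ⟨fun h => by rw [h], fun h => ZMod.val_injective N h⟩
  rw [hiff1, hiff2, e1, e2]
  simp only [h01, h02]
  split_ifs <;> omega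

lemma cdist_eq (i j : ZMod N) : cdist i j = min (i - j).val (-(i - j)).val := by
  rw [cdist, neg_sub]

lemma cc_eq_count (A B : Finset (ZMod N)) (ℓ : ZMod N) :
    cc A B ℓ = Multiset.count ℓ ((A ×ˢ B).val.map fun p => p.1 - p.2) := by
  rw [Multiset.count_map, cc, Finset.card, Finset.filter_val]
  congr 1
  apply Multiset.filter_congr
  intro p _
  exact eq_comm

lemma card_filter_eq (D : Multiset (ZMod N)) (a : ZMod N) :
    (Multiset.filter (fun d => d = a) D).card = Multiset.count a D := by
  rw [Multiset.count, Multiset.countP_eq_card_filter]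
  congr 1
  apply Multiset.filter_congr
  intro d _
  exact eq_comm

lemma count_map_delta (D : Multiset (ZMod N)) (ℓ : ZMod N) :
    Multiset.count (min ℓ.val (-ℓ).val) (D.map fun d => min d.val (-d).val)
      = if ℓ = -ℓ then Multiset.count ℓ D
        else Multiset.count ℓ D + Multiset.count (-ℓ) D := by
  classical
  rw [Multiset.count_map]
  have h : Multiset.filter (fun d => min ℓ.val (-ℓ).val = min d.val (-d).val) D
      = Multiset.filter (fun d => d = ℓ ∨ d = -ℓ) D := by
    apply Multiset.filter_congr
    intro d _
    exact delta_eq_delta_iff ℓ d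
  rw [h]
  by_cases hc : ℓ = -ℓ
  · rw [if_pos hc]
    have : Multiset.filter (fun d => d = ℓ ∨ d = -ℓ) D
        = Multiset.filter (fun d => d = ℓ) D := by
      apply Multiset.filter_congr
      intro d _
      constructor
      · rintro (h | h) <;> simp [h, ← hc]
      · exact Or.inl
    rw [this, card_filter_eq]
  · rw [if_neg hc]
    have h2 : Multiset.filter (fun d => d = ℓ) D + Multiset.filter (fun d => d = -ℓ) D
        = Multiset.filter (fun d => d = ℓ ∨ d = -ℓ) D
          + Multiset.filter (fun d => d = ℓ ∧ d = -ℓ) D :=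
      Multiset.filter_add_filter _ _ D
    have h3 : Multiset.filter (fun d => d = ℓ ∧ d = -ℓ) D = 0 := by
      rw [Multiset.filter_eq_nil]
      rintro d _ ⟨rfl, h⟩
      exact hc h
    have := congrArg Multiset.card h2
    rw [h3, Multiset.card_add, Multiset.card_add, Multiset.card_zero, add_zero] at this
    rw [← this, card_filter_eq, card_filter_eq]

lemma diffMS_map (A B : Finset (ZMod N)) :
    diffMS A B = ((A ×ˢ B).val.map fun p => p.1 - p.2).map fun d => min d.val (-d).val := by
  rw [diffMS, Multiset.map_map]
  apply Multiset.map_congr rfl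
  intro p _
  exact cdist_eq p.1 p.2

lemma diffMS_eq_iff (A B A' B' : Finset (ZMod N)) :
    diffMS A B = diffMS A' B' ↔
      ∀ ℓ, cc A B ℓ + cc A B (-ℓ) = cc A' B' ℓ + cc A' B' (-ℓ) := by
  classical
  constructor
  · intro h ℓ
    have hc := congrArg (Multiset.count (min ℓ.val (-ℓ).val)) h
    rw [diffMS_map, diffMS_map, count_map_delta, count_map_delta] at hc
    by_cases hn : ℓ = -ℓ
    · simp only [if_pos hn] at hc
      rw [← cc_eq_count, ← cc_eq_count] at hc
      rw [← hn, hc]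
    · simp only [if_neg hn] at hc
      rw [← cc_eq_count, ← cc_eq_count, ← cc_eq_count, ← cc_eq_count] at hc
      exact hc
  · intro h
    rw [diffMS_map, diffMS_map]
    ext m
    -- both sides are counts in mapped multisets
    by_cases hm : (∃ d : ZMod N, min d.val (-d).val = m)
    · obtain ⟨ℓ, rfl⟩ := hm
      rw [count_map_delta, count_map_delta, ← cc_eq_count, ← cc_eq_count,
        ← cc_eq_count, ← cc_eq_count]
      have hℓ := h ℓ
      by_cases hn : ℓ = -ℓ
      · simp only [if_pos hn]
        rw [← hn] at hℓ
        omega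
      · simp only [if_neg hn]
        exact hℓ
    · push_neg at hm
      rw [Multiset.count_eq_zero_of_notMem, Multiset.count_eq_zero_of_notMem]
      · intro hmem
        obtain ⟨d, _, hd⟩ := Multiset.mem_map.1 hmem
        exact hm d hd
      · intro hmem
        obtain ⟨d, _, hd⟩ := Multiset.mem_map.1 hmem
        exact hm d hd


open Classical in
noncomputable def mcount (x : ZMod N → ℝ) (a b : ℝ) (ℓ : ZMod N) : ℕ :=
  (Finset.univ.filter fun n : ZMod N => x n = a ∧ x (n + ℓ) = b).card

lemma cc_levelSet (x : ZMod N → ℝ) (a b : ℝ) (ℓ : ZMod N) :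
    cc (levelSet x a) (levelSet x b) ℓ = mcount x b a ℓ := by
  classical
  rw [cc, mcount]
  apply Finset.card_bij' (fun (p : ZMod N × ZMod N) _ => p.2) (fun n _ => (n + ℓ, n))
  · intro p hp
    simp only [Finset.mem_filter, Finset.mem_product, Finset.mem_univ, true_and,
      levelSet] at hp ⊢
    obtain ⟨⟨h1, h2⟩, h3⟩ := hp
    have : p.1 = p.2 + ℓ := by rw [← h3]; ring
    exact ⟨h2, by rw [← this]; exact h1⟩
  · intro n hn
    simp only [Finset.mem_filter, Finset.mem_product, Finset.mem_univ, true_and,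
      levelSet] at hn ⊢
    exact ⟨⟨hn.2, hn.1⟩, by ring⟩
  · intro p hp
    simp only [Finset.mem_filter] at hp
    have : p.1 = p.2 + ℓ := by rw [← hp.2]; ring
    exact Prod.ext this.symm rfl
  · intro n _
    rfl

lemma mcount_neg (x : ZMod N → ℝ) (a b : ℝ) (ℓ : ZMod N) :
    mcount x a b (-ℓ) = mcount x b a ℓ := by
  classical
  rw [mcount, mcount]
  apply Finset.card_bij' (fun (n : ZMod N) _ => n - ℓ) (fun m _ => m + ℓ)
  · intro n hn
    simp only [Finset.mem_filter, Finset.mem_univ, true_and] at hn ⊢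
    refine ⟨?_, ?_⟩
    · have : n + -ℓ = n - ℓ := by ring
      rw [← this]; exact hn.2
    · have : n - ℓ + ℓ = n := by ring
      rw [this]; exact hn.1
  · intro m hm
    simp only [Finset.mem_filter, Finset.mem_univ, true_and] at hm ⊢
    refine ⟨hm.2, ?_⟩
    have : m + ℓ + -ℓ = m := by ring
    rw [this]; exact hm.1
  · intro n _; ring
  · intro m _; ring

variable {K : ℕ}

lemma level_card_one (α : Fin K → ℝ) (hdist : Function.Injective α)
    (x : ZMod N → ℝ) (hx : ∀ n, ∃ k, x n = α k) (n : ZMod N) :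
    (Finset.univ.filter fun k => x n = α k).card = 1 := by
  classical
  obtain ⟨k₀, hk₀⟩ := hx n
  rw [Finset.card_eq_one]
  refine ⟨k₀, ?_⟩
  ext k
  simp only [Finset.mem_filter, Finset.mem_univ, true_and, Finset.mem_singleton]
  constructor
  · intro h; exact (hdist (hk₀.symm.trans h)).symm
  · rintro rfl; exact hk₀

lemma sum_ite_level (α : Fin K → ℝ) (hdist : Function.Injective α)
    (x : ZMod N → ℝ) (hx : ∀ n, ∃ k, x n = α k) (n : ZMod N) :
    ∑ k : Fin K, (if x n = α k then (1 : ℕ) else 0) = 1 := by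
  classical
  have h := level_card_one α hdist x hx n
  rw [Finset.card_filter] at h
  exact h

lemma sum_mcount_fst (α : Fin K → ℝ) (hdist : Function.Injective α)
    (x : ZMod N → ℝ) (hx : ∀ n, ∃ k, x n = α k) (b : ℝ) (ℓ : ZMod N) :
    ∑ k : Fin K, mcount x (α k) b ℓ
      = (Finset.univ.filter fun n : ZMod N => x (n + ℓ) = b).card := by
  classical
  simp only [mcount, Finset.card_filter]
  rw [Finset.sum_comm]
  apply Finset.sum_congr rfl
  intro n _
  by_cases hQ : x (n + ℓ) = b
  · simp only [hQ, and_true, if_pos]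
    simpa using sum_ite_level α hdist x hx n
  · simp [hQ]

lemma sum_mcount_snd (α : Fin K → ℝ) (hdist : Function.Injective α)
    (x : ZMod N → ℝ) (hx : ∀ n, ∃ k, x n = α k) (a : ℝ) (ℓ : ZMod N) :
    ∑ k : Fin K, mcount x a (α k) ℓ
      = (Finset.univ.filter fun n : ZMod N => x n = a).card := by
  classical
  simp only [mcount, Finset.card_filter]
  rw [Finset.sum_comm]
  apply Finset.sum_congr rfl
  intro n _
  by_cases hQ : x n = a
  · simp only [hQ, true_and, if_pos]
    simpa using sum_ite_level α hdist x hx (n + ℓ)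
  · simp [hQ]

lemma card_shift (x : ZMod N → ℝ) (b : ℝ) (ℓ : ZMod N) :
    (Finset.univ.filter fun n : ZMod N => x (n + ℓ) = b).card
      = (Finset.univ.filter fun n : ZMod N => x n = b).card := by
  classical
  apply Finset.card_bij' (fun (n : ZMod N) _ => n + ℓ) (fun m _ => m - ℓ)
  · intro n hn
    simp only [Finset.mem_filter, Finset.mem_univ, true_and] at hn ⊢
    exact hn
  · intro m hm
    simp only [Finset.mem_filter, Finset.mem_univ, true_and] at hm ⊢
    have : m - ℓ + ℓ = m := by ring
    rw [this]; exact hm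
  · intro n _; ring
  · intro m _; ring

lemma levelSet_card (x : ZMod N → ℝ) (a : ℝ) :
    (levelSet x a).card = (Finset.univ.filter fun n : ZMod N => x n = a).card := by
  classical
  rw [levelSet]

lemma mcount_zero (x : ZMod N → ℝ) (a : ℝ) :
    mcount x a a 0 = (levelSet x a).card := by
  classical
  rw [mcount, levelSet_card]
  congr 1
  apply Finset.filter_congr
  intro n _
  simp

lemma ite_mul_ite {P Q : Prop} [Decidable P] [Decidable Q] (a b : ℝ) :
    (if P then a else 0) * (if Q then b else 0) = if P ∧ Q then a * b else 0 := by
  split_ifs with h1 h2 h3 <;> simp_all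

lemma autocorr_formula (α : Fin K → ℝ) (hdist : Function.Injective α)
    (x : ZMod N → ℝ) (hx : ∀ n, ∃ k, x n = α k) (ℓ : ZMod N) :
    autocorr x ℓ = ∑ k : Fin K, ∑ k' : Fin K,
      α k * α k' * (mcount x (α k) (α k') ℓ : ℝ) := by
  classical
  have e1 : ∀ m : ZMod N, x m = ∑ k : Fin K, if x m = α k then α k else 0 := by
    intro m
    obtain ⟨k₀, hk₀⟩ := hx m
    have hcond : ∀ k, (x m = α k) ↔ (k = k₀) :=
      fun k => ⟨fun h => (hdist (hk₀.symm.trans h)).symm, fun h => h ▸ hk₀⟩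
    simp only [hcond]
    rw [Finset.sum_ite_eq' Finset.univ k₀ α]
    simp [hk₀]
  rw [autocorr]
  have e2 : ∀ n : ZMod N, x n * x (n + ℓ)
      = ∑ k : Fin K, ∑ k' : Fin K,
          if x n = α k ∧ x (n + ℓ) = α k' then α k * α k' else 0 := by
    intro n
    conv_lhs => rw [e1 n, e1 (n + ℓ)]
    rw [Finset.sum_mul_sum]
    apply Finset.sum_congr rfl; intro k _
    apply Finset.sum_congr rfl; intro k' _
    clear e1
    by_cases h1 : x n = α k <;> by_cases h2 : x (n + ℓ) = α k' <;> simp [h1, h2]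
  rw [Finset.sum_congr rfl fun n _ => e2 n]
  rw [Finset.sum_comm]
  apply Finset.sum_congr rfl; intro k _
  rw [Finset.sum_comm]
  apply Finset.sum_congr rfl; intro k' _
  rw [mcount, Finset.card_filter]
  push_cast
  rw [Finset.mul_sum]
  apply Finset.sum_congr rfl; intro n _
  split_ifs <;> simp

variable [NeZero K]

noncomputable def wgt (α : Fin K → ℝ) (x : ZMod N → ℝ)
    (q : {p : Fin K × Fin K // p.1 ≠ 0 ∧ p.1 ≤ p.2}) (ℓ : ZMod N) : ℕ :=
  if q.1.1 = q.1.2 then mcount x (α q.1.1) (α q.1.2) ℓ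
  else mcount x (α q.1.1) (α q.1.2) ℓ + mcount x (α q.1.2) (α q.1.1) ℓ

lemma autocorr_formula' (α : Fin K → ℝ) (h0 : α 0 = 0) (hdist : Function.Injective α)
    (x : ZMod N → ℝ) (hx : ∀ n, ∃ k, x n = α k) (ℓ : ZMod N) :
    autocorr x ℓ = ∑ q : {p : Fin K × Fin K // p.1 ≠ 0 ∧ p.1 ≤ p.2},
      (α q.1.1 * α q.1.2) * (wgt α x q ℓ : ℝ) := by
  classical
  rw [autocorr_formula α hdist x hx ℓ]
  set F : Fin K × Fin K → ℝ :=
    fun p => α p.1 * α p.2 * (mcount x (α p.1) (α p.2) ℓ : ℝ) with hF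
  have hprod : ∑ k : Fin K, ∑ k' : Fin K, α k * α k' * (mcount x (α k) (α k') ℓ : ℝ)
      = ∑ p : Fin K × Fin K, F p := by
    rw [Fintype.sum_prod_type]
  rw [hprod]
  set J : Fin K × Fin K → ℝ :=
    fun p => F p + (if p.1 = p.2 then 0 else F p.swap) with hJ
  have hsplit : ∑ p : Fin K × Fin K, F p
      = ∑ p ∈ Finset.univ.filter (fun p : Fin K × Fin K => p.1 ≤ p.2), F p
        + ∑ p ∈ Finset.univ.filter (fun p : Fin K × Fin K => ¬ p.1 ≤ p.2), F p :=
    (Finset.sum_filter_add_sum_filter_not _ _ _).symm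
  have hswap : ∑ p ∈ Finset.univ.filter (fun p : Fin K × Fin K => ¬ p.1 ≤ p.2), F p
      = ∑ p ∈ Finset.univ.filter
          (fun p : Fin K × Fin K => p.1 ≤ p.2 ∧ ¬ p.1 = p.2), F p.swap := by
    apply Finset.sum_nbij' (i := Prod.swap) (j := Prod.swap)
    · intro p hp
      simp only [Finset.mem_filter, Finset.mem_univ, true_and] at hp ⊢
      constructor
      · exact le_of_not_ge hp
      · intro h
        exact hp (le_of_eq h.symm)
    · intro p hp
      simp only [Finset.mem_filter, Finset.mem_univ, true_and] at hp ⊢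
      intro h
      exact hp.2 (le_antisymm hp.1 h)
    · intro p _; exact Prod.swap_swap p
    · intro p _; exact Prod.swap_swap p
    · intro p _; rfl
  have hmerge : ∑ p ∈ Finset.univ.filter
        (fun p : Fin K × Fin K => p.1 ≤ p.2 ∧ ¬ p.1 = p.2), F p.swap
      = ∑ p ∈ Finset.univ.filter (fun p : Fin K × Fin K => p.1 ≤ p.2),
          (if p.1 = p.2 then 0 else F p.swap) := by
    rw [← Finset.filter_filter, Finset.sum_filter]
    apply Finset.sum_congr rfl
    intro p _
    rw [ite_not]
  have htot : ∑ p : Fin K × Fin K, F p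
      = ∑ p ∈ Finset.univ.filter (fun p : Fin K × Fin K => p.1 ≤ p.2), J p := by
    rw [hsplit, hswap, hmerge, ← Finset.sum_add_distrib]
  rw [htot]
  have hsub : Finset.univ.filter (fun p : Fin K × Fin K => p.1 ≠ 0 ∧ p.1 ≤ p.2)
      ⊆ Finset.univ.filter (fun p : Fin K × Fin K => p.1 ≤ p.2) := by
    intro p hp
    simp only [Finset.mem_filter, Finset.mem_univ, true_and] at hp ⊢
    exact hp.2
  have hvanish : ∀ p ∈ Finset.univ.filter (fun p : Fin K × Fin K => p.1 ≤ p.2),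
      p ∉ Finset.univ.filter (fun p : Fin K × Fin K => p.1 ≠ 0 ∧ p.1 ≤ p.2) → J p = 0 := by
    intro p hp hnp
    simp only [Finset.mem_filter, Finset.mem_univ, true_and] at hp hnp
    have hz : p.1 = 0 := by
      by_contra h
      exact hnp ⟨h, hp⟩
    simp only [hJ, hF, hz, h0, Prod.fst_swap, Prod.snd_swap]
    split_ifs <;> ring
  rw [← Finset.sum_subset hsub hvanish]
  rw [← Finset.sum_subtype_eq_sum_filter J, Finset.subtype_univ]
  apply Finset.sum_congr rfl
  intro q _
  by_cases hq : q.1.1 = q.1.2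
  · simp only [hJ, hF, wgt, if_pos hq]
    push_cast
    ring
  · simp only [hJ, hF, wgt, if_neg hq, Prod.fst_swap, Prod.snd_swap]
    push_cast
    ring

noncomputable def scount (α : Fin K → ℝ) (x : ZMod N → ℝ) (k k' : Fin K) (ℓ : ZMod N) : ℕ :=
  mcount x (α k) (α k') ℓ + mcount x (α k') (α k) ℓ

lemma scount_comm (α : Fin K → ℝ) (x : ZMod N → ℝ) (k k' : Fin K) (ℓ : ZMod N) :
    scount α x k k' ℓ = scount α x k' k ℓ := add_comm _ _

lemma sum_scount (α : Fin K → ℝ) (hdist : Function.Injective α)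
    (x : ZMod N → ℝ) (hx : ∀ n, ∃ k, x n = α k) (k' : Fin K) (ℓ : ZMod N) :
    ∑ k : Fin K, scount α x k k' ℓ = 2 * (levelSet x (α k')).card := by
  simp only [scount]
  rw [Finset.sum_add_distrib, sum_mcount_fst α hdist x hx, sum_mcount_snd α hdist x hx,
    card_shift, levelSet_card]
  ring

lemma diffMS_levelSet_iff (α : Fin K → ℝ) (x x' : ZMod N → ℝ) (i j : Fin K) :
    diffMS (levelSet x (α i)) (levelSet x (α j))
        = diffMS (levelSet x' (α i)) (levelSet x' (α j))
      ↔ ∀ ℓ, scount α x i j ℓ = scount α x' i j ℓ := by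
  rw [diffMS_eq_iff]
  have h : ∀ (y : ZMod N → ℝ) (ℓ : ZMod N),
      cc (levelSet y (α i)) (levelSet y (α j)) ℓ
        + cc (levelSet y (α i)) (levelSet y (α j)) (-ℓ) = scount α y i j ℓ := by
    intro y ℓ
    rw [cc_levelSet, cc_levelSet, mcount_neg, scount, add_comm]
  constructor
  · intro hcc ℓ
    rw [← h x ℓ, ← h x' ℓ]
    exact hcc ℓ
  · intro hs ℓ
    rw [h x ℓ, h x' ℓ]
    exact hs ℓ

lemma ne_zero_of_le {k k' : Fin K} (hk : k ≠ 0) (hle : k ≤ k') : k' ≠ 0 := by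
  intro h
  subst h
  exact hk (Fin.le_zero_iff'.mp hle)

lemma wgt_eq_of_scount (α : Fin K → ℝ) (x x' : ZMod N → ℝ)
    (hs : ∀ k k', k ≠ 0 → k' ≠ 0 → ∀ ℓ, scount α x k k' ℓ = scount α x' k k' ℓ)
    (q : {p : Fin K × Fin K // p.1 ≠ 0 ∧ p.1 ≤ p.2}) (ℓ : ZMod N) :
    wgt α x q ℓ = wgt α x' q ℓ := by
  obtain ⟨⟨k, k'⟩, hk, hle⟩ := q
  have hk' : k' ≠ 0 := ne_zero_of_le hk hle
  have h := hs k k' hk hk' ℓ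
  have e1 : wgt α x ⟨(k, k'), hk, hle⟩ ℓ
      = if k = k' then mcount x (α k) (α k') ℓ
        else mcount x (α k) (α k') ℓ + mcount x (α k') (α k) ℓ := rfl
  have e2 : wgt α x' ⟨(k, k'), hk, hle⟩ ℓ
      = if k = k' then mcount x' (α k) (α k') ℓ
        else mcount x' (α k) (α k') ℓ + mcount x' (α k') (α k) ℓ := rfl
  rw [e1, e2]
  simp only [scount] at h
  split_ifs with he
  · subst he
    omega
  · exact h

lemma scount_of_wgt (α : Fin K → ℝ) (x x' : ZMod N → ℝ)
    (hw : ∀ (q : {p : Fin K × Fin K // p.1 ≠ 0 ∧ p.1 ≤ p.2}) (ℓ : ZMod N),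
      wgt α x q ℓ = wgt α x' q ℓ)
    {k k' : Fin K} (hk : k ≠ 0) (hk' : k' ≠ 0) (ℓ : ZMod N) :
    scount α x k k' ℓ = scount α x' k k' ℓ := by
  rcases le_or_gt k k' with hle | hlt
  · have h := hw ⟨(k, k'), hk, hle⟩ ℓ
    have e1 : wgt α x ⟨(k, k'), hk, hle⟩ ℓ
        = if k = k' then mcount x (α k) (α k') ℓ
          else mcount x (α k) (α k') ℓ + mcount x (α k') (α k) ℓ := rfl
    have e2 : wgt α x' ⟨(k, k'), hk, hle⟩ ℓ
        = if k = k' then mcount x' (α k) (α k') ℓ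
          else mcount x' (α k) (α k') ℓ + mcount x' (α k') (α k) ℓ := rfl
    rw [e1, e2] at h
    simp only [scount]
    split_ifs at h with he
    · subst he
      omega
    · exact h
  · have hle := le_of_lt hlt
    have h := hw ⟨(k', k), hk', hle⟩ ℓ
    have he : ¬ k' = k := ne_of_lt hlt
    have e1 : wgt α x ⟨(k', k), hk', hle⟩ ℓ
        = if k' = k then mcount x (α k') (α k) ℓ
          else mcount x (α k') (α k) ℓ + mcount x (α k) (α k') ℓ := rfl
    have e2 : wgt α x' ⟨(k', k), hk', hle⟩ ℓ
        = if k' = k then mcount x' (α k') (α k) ℓ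
          else mcount x' (α k') (α k) ℓ + mcount x' (α k) (α k') ℓ := rfl
    rw [e1, e2, if_neg he, if_neg he] at h
    simp only [scount]
    omega

lemma sum_levelSet_card (α : Fin K → ℝ) (hdist : Function.Injective α)
    (x : ZMod N → ℝ) (hx : ∀ n, ∃ k, x n = α k) :
    ∑ k : Fin K, (levelSet x (α k)).card = N := by
  classical
  have h : ∀ k : Fin K, (levelSet x (α k)).card
      = ∑ n : ZMod N, if x n = α k then 1 else 0 := by
    intro k
    rw [levelSet_card, Finset.card_filter]
  rw [Finset.sum_congr rfl fun k _ => h k, Finset.sum_comm]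
  rw [Finset.sum_congr rfl fun n _ => sum_ite_level α hdist x hx n]
  simp [ZMod.card]

lemma levelSet_card_eq (α : Fin K → ℝ) (hdist : Function.Injective α)
    (x x' : ZMod N → ℝ) (hx : ∀ n, ∃ k, x n = α k) (hx' : ∀ n, ∃ k, x' n = α k)
    (hs : ∀ k k', k ≠ 0 → k' ≠ 0 → ∀ ℓ, scount α x k k' ℓ = scount α x' k k' ℓ)
    (k : Fin K) : (levelSet x (α k)).card = (levelSet x' (α k)).card := by
  classical
  have hne : ∀ k : Fin K, k ≠ 0 →
      (levelSet x (α k)).card = (levelSet x' (α k)).card := by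
    intro k hk
    have h := hs k k hk hk 0
    simp only [scount, mcount_zero] at h
    omega
  by_cases hk : k = 0
  · subst hk
    have h1 := sum_levelSet_card α hdist x hx
    have h2 := sum_levelSet_card α hdist x' hx'
    rw [← Finset.add_sum_erase _ _ (Finset.mem_univ 0)] at h1 h2
    have h3 : ∑ k ∈ Finset.univ.erase 0, (levelSet x (α k)).card
        = ∑ k ∈ Finset.univ.erase 0, (levelSet x' (α k)).card := by
      apply Finset.sum_congr rfl
      intro k hk
      exact hne k (Finset.mem_erase.mp hk).1
    omega
  · exact hne k hk

lemma scount_all_eq (α : Fin K → ℝ) (hdist : Function.Injective α)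
    (x x' : ZMod N → ℝ) (hx : ∀ n, ∃ k, x n = α k) (hx' : ∀ n, ∃ k, x' n = α k)
    (hs : ∀ k k', k ≠ 0 → k' ≠ 0 → ∀ ℓ, scount α x k k' ℓ = scount α x' k k' ℓ)
    (k k' : Fin K) (ℓ : ZMod N) : scount α x k k' ℓ = scount α x' k k' ℓ := by
  classical
  have hcard := levelSet_card_eq α hdist x x' hx hx' hs
  -- first: the case k = 0, k' ≠ 0 (and symmetric)
  have h0r : ∀ k' : Fin K, k' ≠ 0 → ∀ ℓ, scount α x 0 k' ℓ = scount α x' 0 k' ℓ := by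
    intro k' hk' ℓ
    have h1 := sum_scount α hdist x hx k' ℓ
    have h2 := sum_scount α hdist x' hx' k' ℓ
    rw [← Finset.add_sum_erase _ _ (Finset.mem_univ 0)] at h1 h2
    have h3 : ∑ k ∈ Finset.univ.erase 0, scount α x k k' ℓ
        = ∑ k ∈ Finset.univ.erase 0, scount α x' k k' ℓ := by
      apply Finset.sum_congr rfl
      intro k hk
      exact hs k k' (Finset.mem_erase.mp hk).1 hk' ℓ
    have h4 := hcard k'
    omega
  have h00 : ∀ ℓ, scount α x 0 0 ℓ = scount α x' 0 0 ℓ := by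
    intro ℓ
    have h1 := sum_scount α hdist x hx 0 ℓ
    have h2 := sum_scount α hdist x' hx' 0 ℓ
    rw [← Finset.add_sum_erase _ _ (Finset.mem_univ 0)] at h1 h2
    have h3 : ∑ k ∈ Finset.univ.erase 0, scount α x k 0 ℓ
        = ∑ k ∈ Finset.univ.erase 0, scount α x' k 0 ℓ := by
      apply Finset.sum_congr rfl
      intro k hk
      rw [scount_comm α x, scount_comm α x']
      exact h0r k (Finset.mem_erase.mp hk).1 ℓ
    have h4 := hcard 0
    omega
  by_cases hk : k = 0 <;> by_cases hk' : k' = 0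
  · subst hk; subst hk'; exact h00 ℓ
  · subst hk; exact h0r k' hk' ℓ
  · subst hk'
    rw [scount_comm α x, scount_comm α x']
    exact h0r k hk ℓ
  · exact hs k k' hk hk' ℓ

end SparseAux

open SparseAux in
/-- sparse finite-alphabet phase retrieval: the first letter of the
alphabet is zero, the remaining letters are generic. -/
theorem sparse_finite_alphabet_phase_retrieval (N K : ℕ) [NeZero N] [NeZero K]
    (hK : 2 ≤ K) (α : Fin K → ℝ) (h0 : α 0 = 0) (hdist : Function.Injective α)
    (hgen : LinearIndependent ℚ
      (fun p : {p : Fin K × Fin K // p.1 ≠ 0 ∧ p.1 ≤ p.2} => α p.1.1 * α p.1.2))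
    (x x' : ZMod N → ℝ)
    (hx : ∀ n, ∃ k, x n = α k) (hx' : ∀ n, ∃ k, x' n = α k) :
    autocorr x = autocorr x' ↔
      HomometricPart (fun k => levelSet x (α k)) (fun k => levelSet x' (α k)) := by
  classical
  constructor
  · intro hac
    have hw : ∀ (q : {p : Fin K × Fin K // p.1 ≠ 0 ∧ p.1 ≤ p.2}) (ℓ : ZMod N),
        wgt α x q ℓ = wgt α x' q ℓ := by
      intro q ℓ
      have h1 := autocorr_formula' α h0 hdist x hx ℓ
      have h2 := autocorr_formula' α h0 hdist x' hx' ℓ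
      have h3 : ∑ q : {p : Fin K × Fin K // p.1 ≠ 0 ∧ p.1 ≤ p.2},
          ((wgt α x q ℓ : ℚ) - (wgt α x' q ℓ : ℚ))
            • (α q.1.1 * α q.1.2) = 0 := by
        have hz : autocorr x ℓ - autocorr x' ℓ = 0 := by rw [hac]; ring
        rw [h1, h2, ← Finset.sum_sub_distrib] at hz
        rw [← hz]
        apply Finset.sum_congr rfl
        intro q _
        rw [Rat.smul_def]
        push_cast
        ring
      have h4 := Fintype.linearIndependent_iff.mp hgen
          (fun q => (wgt α x q ℓ : ℚ) - (wgt α x' q ℓ : ℚ)) h3 q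
      have h5 : (wgt α x q ℓ : ℚ) = (wgt α x' q ℓ : ℚ) := sub_eq_zero.mp h4
      exact_mod_cast h5
    have hsnz : ∀ k k', k ≠ 0 → k' ≠ 0 → ∀ ℓ,
        scount α x k k' ℓ = scount α x' k k' ℓ :=
      fun k k' hk hk' ℓ => scount_of_wgt α x x' hw hk hk' ℓ
    have hall := scount_all_eq α hdist x x' hx hx' hsnz
    exact fun i j => (diffMS_levelSet_iff α x x' i j).mpr (fun ℓ => hall i j ℓ)
  · intro hhp
    have hs : ∀ i j (ℓ : ZMod N), scount α x i j ℓ = scount α x' i j ℓ :=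
      fun i j => (diffMS_levelSet_iff α x x' i j).mp (hhp i j)
    have hw : ∀ (q : {p : Fin K × Fin K // p.1 ≠ 0 ∧ p.1 ≤ p.2}) (ℓ : ZMod N),
        wgt α x q ℓ = wgt α x' q ℓ :=
      fun q ℓ => wgt_eq_of_scount α x x' (fun k k' _ _ ℓ => hs k k' ℓ) q ℓ
    funext ℓ
    rw [autocorr_formula' α h0 hdist x hx ℓ, autocorr_formula' α h0 hdist x' hx' ℓ]
    apply Finset.sum_congr rfl
    intro q _
    rw [hw q ℓ]
end

section
/- Let N ≥ 1 and 1 ≤ K < N. Consider two ordered partitions of [0,N-1] of type (N−K, 1, …, 1), i.e., of the form (A, {a_1}, …, {a_K}) and (A', {a'_1}, …, {a'_K}) where a_1, …, a_K are distinct elements, A is their complement, and similarly for the primed partition. Then these two ordered partitions are homometric if and only if they are equivalent (there exists σ ∈ D_{2N} with A' = σA and a'_i = σ(a_i) for all i). -/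
section AuxSingletonType

variable {N : ℕ} [NeZero N]

lemma cdist_eq' {i j k l : ZMod N} (h : cdist i j = cdist k l) :
    k - l = i - j ∨ k - l = j - i := by
  unfold cdist at h
  have vi := ZMod.val_injective N
  rcases min_cases (i-j).val (j-i).val with ⟨e1, _⟩ | ⟨e1, _⟩ <;>
    rcases min_cases (k-l).val (l-k).val with ⟨e2, _⟩ | ⟨e2, _⟩ <;>
    rw [e1, e2] at h
  · exact Or.inl (vi h).symm
  · exact Or.inr (by linear_combination -vi h.symm : k - l = j - i)
  · exact Or.inr (vi h).symm
  · exact Or.inl (by linear_combination -vi h.symm : k - l = i - j)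

lemma dihedral_bij {σ : ZMod N → ZMod N} (h : IsDihedral σ) : Function.Bijective σ := by
  rcases h with ⟨k, hk⟩ | ⟨k, hk⟩
  · have : σ = ⇑(Equiv.addRight k) := funext fun i => hk i
    rw [this]; exact (Equiv.addRight k).bijective
  · have : σ = ⇑((Equiv.neg (ZMod N)).trans (Equiv.addRight k)) := funext fun i => hk i
    rw [this]; exact ((Equiv.neg (ZMod N)).trans (Equiv.addRight k)).bijective

lemma dihedral_cdist {σ : ZMod N → ZMod N} (h : IsDihedral σ) (i j : ZMod N) :
    cdist (σ i) (σ j) = cdist i j := by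
  rcases h with ⟨k, hk⟩ | ⟨k, hk⟩ <;> simp only [hk] <;> unfold cdist
  · congr 1 <;> congr 1 <;> ring
  · rw [show (-i+k)-(-j+k) = j - i by ring, show (-j+k)-(-i+k) = i - j by ring, min_comm]

lemma diffMS_image {σ : ZMod N → ZMod N} (h : IsDihedral σ) (S T : Finset (ZMod N)) :
    diffMS (S.image σ) (T.image σ) = diffMS S T := by
  have hb := dihedral_bij h
  have hprod : (S.image σ) ×ˢ (T.image σ) = (S ×ˢ T).image (Prod.map σ σ) := by
    ext ⟨x, y⟩
    simp only [Finset.mem_product, Finset.mem_image, Prod.ext_iff,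
      Prod.exists, Prod.map_apply]
    aesop
  unfold diffMS
  rw [hprod, Finset.image_val_of_injOn ((hb.1.prodMap hb.1).injOn), Multiset.map_map]
  exact Multiset.map_congr rfl fun p _ => dihedral_cdist h p.1 p.2

lemma image_compl_bij {σ : ZMod N → ZMod N} (hb : Function.Bijective σ) (S : Finset (ZMod N)) :
    Sᶜ.image σ = (S.image σ)ᶜ := by
  ext y
  obtain ⟨x, rfl⟩ := hb.2 y
  simp only [Finset.mem_image, Finset.mem_compl]
  constructor
  · rintro ⟨z, hz, hzx⟩ hmem
    obtain ⟨w, hw, hwx⟩ := hmem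
    exact hz (hb.1 (hzx.trans hwx.symm) ▸ hw)
  · intro hx
    exact ⟨x, fun hxS => hx ⟨x, hxS, rfl⟩, rfl⟩

lemma equiv_of_pointwise {K : ℕ} (a a' : Fin K → ZMod N)
    {σ : ZMod N → ZMod N} (hσ : IsDihedral σ) (hσa : ∀ i, σ (a i) = a' i) :
    EquivPart
        (Fin.cons (Finset.image a Finset.univ)ᶜ (fun i => {a i}))
        (Fin.cons (Finset.image a' Finset.univ)ᶜ (fun i => {a' i})) := by
  refine ⟨σ, hσ, ?_⟩
  intro i
  refine Fin.cases ?_ ?_ i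
  · simp only [Fin.cons_zero]
    rw [image_compl_bij (dihedral_bij hσ), Finset.image_image]
    congr 1
    exact Finset.image_congr fun x _ => (hσa x).symm
  · intro i
    simp only [Fin.cons_succ, Finset.image_singleton, hσa i]


end AuxSingletonType

/-- partitions of type `(N-K, 1, …, 1)` are homometric iff they
are equivalent. -/
theorem singleton_type_partitions (N K : ℕ) [NeZero N] (hK : 1 ≤ K) (hKN : K < N)
    (a a' : Fin K → ZMod N) (ha : Function.Injective a) (ha' : Function.Injective a') :
    HomometricPart
        (Fin.cons (Finset.image a Finset.univ)ᶜ (fun i => {a i}))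
        (Fin.cons (Finset.image a' Finset.univ)ᶜ (fun i => {a' i})) ↔
      EquivPart
        (Fin.cons (Finset.image a Finset.univ)ᶜ (fun i => {a i}))
        (Fin.cons (Finset.image a' Finset.univ)ᶜ (fun i => {a' i})) := by
  constructor
  · intro H
    have hd : ∀ i j : Fin K, cdist (a i) (a j) = cdist (a' i) (a' j) := by
      intro i j
      have h := H i.succ j.succ
      simp only [Fin.cons_succ] at h
      unfold diffMS at h
      rw [Finset.singleton_product_singleton, Finset.singleton_product_singleton] at h
      simpa using h
    have key : ∀ i j, a' i - a' j = a i - a j ∨ a' i - a' j = a j - a i :=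
      fun i j => cdist_eq' (hd i j)
    set i0 : Fin K := ⟨0, hK⟩ with hi0
    by_cases hall : ∀ i, a' i - a' i0 = a i - a i0
    · refine equiv_of_pointwise a a' (Or.inl ⟨a' i0 - a i0, fun _ => rfl⟩) ?_
      intro i
      linear_combination -hall i
    · push_neg at hall
      obtain ⟨j0, hj0⟩ := hall
      have hj0' : a' j0 - a' i0 = a i0 - a j0 := (key j0 i0).resolve_left hj0
      have hneg : ∀ i, a' i - a' i0 = a i0 - a i := by
        intro i
        rcases key i i0 with h | h
        · rcases key i j0 with h' | h'
          · exact absurd (by linear_combination h - h') hj0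
          · linear_combination h' + hj0'
        · exact h
      refine equiv_of_pointwise a a' (Or.inr ⟨a' i0 + a i0, fun _ => rfl⟩) ?_
      intro i
      linear_combination -hneg i
  · rintro ⟨σ, hσ, hB⟩
    intro i j
    rw [hB i, hB j]
    exact (diffMS_image hσ _ _).symm
end
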